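/- arXiv:2307.09256 — 7 statements merged into one kernel-verified Lean document; each statement's English description precedes it below -/
import Mathlib

section
/- If a query window W intersects a tile T and W starts before T in dimension x (i.e., W.x_l < T.x_l), then any rectangle r assigned to T in class C or class D that intersects W also intersects W within the previous tile prev(T,x); hence reporting such r in T would produce a duplicate result. -/
structure Rect where
  xl : ℝ
  xu : ℝ
  yl : ℝ
  yu : ℝ

/-- If W intersects tile T and W starts before T in dimension x, then any rectangle r
assigned to T in class C or D that intersects W also intersects W within prev(T,x),
the tile immediately to the left of T with the same y-projection. -/
theorem stmt1 (T W r : Rect)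
    (hTx : T.xl < T.xu) (hTy : T.yl < T.yu)
    (hWv : W.xl ≤ W.xu ∧ W.yl ≤ W.yu) (hrv : r.xl ≤ r.xu ∧ r.yl ≤ r.yu)
    -- W intersects the half-open tile T
    (hWT : W.xl < T.xu ∧ T.xl ≤ W.xu ∧ W.yl < T.yu ∧ T.yl ≤ W.yu)
    -- r is assigned to T (intersects T)
    (hrT : r.xl < T.xu ∧ T.xl ≤ r.xu ∧ r.yl < T.yu ∧ T.yl ≤ r.yu)
    -- r is in class C or in class D of T
    (hCD : (r.xl < T.xl ∧ T.yl ≤ r.yl) ∨ (r.xl < T.xl ∧ r.yl < T.yl))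
    -- W starts before T in dimension x
    (hWx : W.xl < T.xl)
    -- r intersects W
    (hrW : r.xl ≤ W.xu ∧ W.xl ≤ r.xu ∧ r.yl ≤ W.yu ∧ W.yl ≤ r.yu) :
    ∃ x y : ℝ,
      (r.xl ≤ x ∧ x ≤ r.xu ∧ r.yl ≤ y ∧ y ≤ r.yu) ∧
      (W.xl ≤ x ∧ x ≤ W.xu ∧ W.yl ≤ y ∧ y ≤ W.yu) ∧
      -- the point lies in prev(T,x) = [2*T.xl - T.xu, T.xl) × [T.yl, T.yu)
      ((2 * T.xl - T.xu) ≤ x ∧ x < T.xl ∧ T.yl ≤ y ∧ y < T.yu) := by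
  obtain ⟨hW1, hW2⟩ := hWv
  obtain ⟨hr1, hr2⟩ := hrv
  obtain ⟨h1, h2, h3, h4⟩ := hWT
  obtain ⟨h5, h6, h7, h8⟩ := hrT
  obtain ⟨h9, h10, h11, h12⟩ := hrW
  have hrxl : r.xl < T.xl := by rcases hCD with ⟨h, _⟩ | ⟨h, _⟩ <;> exact h
  refine ⟨max (max r.xl W.xl) (2 * T.xl - T.xu), max (max r.yl W.yl) T.yl,
    ⟨?_, ?_, ?_, ?_⟩, ⟨?_, ?_, ?_, ?_⟩, ?_, ?_, ?_, ?_⟩ <;>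
  simp only [le_max_iff, max_le_iff, max_lt_iff, le_refl, true_or, or_true, true_and] <;>
  constructor <;> try constructor
  all_goals linarith
end

section
/- If a query window W intersects a tile T and W starts before T in dimension y (i.e., W.y_l < T.y_l), then any rectangle r assigned to T in class B or class D that intersects W also intersects W in the previous tile prev(T,y). -/
/-- If W intersects tile T and W starts before T in dimension y, then any rectangle r
assigned to T in class B or D that intersects W also intersects W within prev(T,y),
the tile immediately preceding T in dimension y with the same x-projection. -/
theorem stmt2 (T W r : Rect)
    (hTx : T.xl < T.xu) (hTy : T.yl < T.yu)
    (hWv : W.xl ≤ W.xu ∧ W.yl ≤ W.yu) (hrv : r.xl ≤ r.xu ∧ r.yl ≤ r.yu)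
    -- W intersects the half-open tile T
    (hWT : W.xl < T.xu ∧ T.xl ≤ W.xu ∧ W.yl < T.yu ∧ T.yl ≤ W.yu)
    -- r is assigned to T (intersects T)
    (hrT : r.xl < T.xu ∧ T.xl ≤ r.xu ∧ r.yl < T.yu ∧ T.yl ≤ r.yu)
    -- r is in class B or in class D of T
    (hBD : (T.xl ≤ r.xl ∧ r.yl < T.yl) ∨ (r.xl < T.xl ∧ r.yl < T.yl))
    -- W starts before T in dimension y
    (hWy : W.yl < T.yl)
    -- r intersects W
    (hrW : r.xl ≤ W.xu ∧ W.xl ≤ r.xu ∧ r.yl ≤ W.yu ∧ W.yl ≤ r.yu) :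
    ∃ x y : ℝ,
      (r.xl ≤ x ∧ x ≤ r.xu ∧ r.yl ≤ y ∧ y ≤ r.yu) ∧
      (W.xl ≤ x ∧ x ≤ W.xu ∧ W.yl ≤ y ∧ y ≤ W.yu) ∧
      -- the point lies in prev(T,y) = [T.xl, T.xu) × [2*T.yl - T.yu, T.yl)
      (T.xl ≤ x ∧ x < T.xu ∧ (2 * T.yl - T.yu) ≤ y ∧ y < T.yl) := by
  have hry : r.yl < T.yl := by rcases hBD with ⟨_, h⟩ | ⟨_, h⟩ <;> exact h
  obtain ⟨h1, h2⟩ := hWv; obtain ⟨h3, h4⟩ := hrv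
  obtain ⟨h5, h6, h7, h8⟩ := hWT; obtain ⟨h9, h10, h11, h12⟩ := hrT
  obtain ⟨h13, h14, h15, h16⟩ := hrW
  refine ⟨max T.xl (max r.xl W.xl), max (2 * T.yl - T.yu) (max r.yl W.yl), ?_, ?_, ?_⟩ <;>
    refine ⟨?_, ?_, ?_, ?_⟩ <;>
    simp only [max_le_iff, max_lt_iff, le_max_iff, lt_max_iff] <;>
    first
      | (constructor <;> [skip; constructor] <;> linarith)
      | linarith
      | (left; linarith)
      | (right; left; linarith)
      | (right; right; linarith)
end

section
/- For a spatial join within a tile T, if rectangles r ∈ R and s ∈ S both belong to class B of T (both start before T in dimension y and inside T in dimension x) and r intersects s, then r and s both intersect the tile prev(T,y) and their intersection is also witnessed there; hence the mini-join R^B_T ⋈ S^B_T produces only duplicate results. -/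
/-- If r ∈ R and s ∈ S both belong to class B of tile T and intersect each other,
then both intersect prev(T,y) and their intersection is witnessed there; hence the
mini-join R^B_T ⋈ S^B_T produces only duplicate results. -/
theorem stmt7 (T r s : Rect)
    (hTx : T.xl < T.xu) (hTy : T.yl < T.yu)
    (hrv : r.xl ≤ r.xu ∧ r.yl ≤ r.yu) (hsv : s.xl ≤ s.xu ∧ s.yl ≤ s.yu)
    -- r and s are assigned to the half-open tile T
    (hrT : r.xl < T.xu ∧ T.xl ≤ r.xu ∧ r.yl < T.yu ∧ T.yl ≤ r.yu)
    (hsT : s.xl < T.xu ∧ T.xl ≤ s.xu ∧ s.yl < T.yu ∧ T.yl ≤ s.yu)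
    -- both are in class B of T
    (hrB : T.xl ≤ r.xl ∧ r.yl < T.yl) (hsB : T.xl ≤ s.xl ∧ s.yl < T.yl)
    -- r intersects s
    (hrs : r.xl ≤ s.xu ∧ s.xl ≤ r.xu ∧ r.yl ≤ s.yu ∧ s.yl ≤ r.yu) :
    -- prev(T,y) = [T.xl, T.xu) × [2*T.yl - T.yu, T.yl)
    (∃ x y : ℝ, (r.xl ≤ x ∧ x ≤ r.xu ∧ r.yl ≤ y ∧ y ≤ r.yu) ∧
       (T.xl ≤ x ∧ x < T.xu ∧ (2 * T.yl - T.yu) ≤ y ∧ y < T.yl)) ∧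
    (∃ x y : ℝ, (s.xl ≤ x ∧ x ≤ s.xu ∧ s.yl ≤ y ∧ y ≤ s.yu) ∧
       (T.xl ≤ x ∧ x < T.xu ∧ (2 * T.yl - T.yu) ≤ y ∧ y < T.yl)) ∧
    (∃ x y : ℝ, (r.xl ≤ x ∧ x ≤ r.xu ∧ r.yl ≤ y ∧ y ≤ r.yu) ∧
       (s.xl ≤ x ∧ x ≤ s.xu ∧ s.yl ≤ y ∧ y ≤ s.yu) ∧
       (T.xl ≤ x ∧ x < T.xu ∧ (2 * T.yl - T.yu) ≤ y ∧ y < T.yl)) := by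
  obtain ⟨hrx, hry⟩ := hrv
  obtain ⟨hsx, hsy⟩ := hsv
  obtain ⟨h1, h2, h3, h4⟩ := hrT
  obtain ⟨h5, h6, h7, h8⟩ := hsT
  obtain ⟨h9, h10⟩ := hrB
  obtain ⟨h11, h12⟩ := hsB
  obtain ⟨h13, h14, h15, h16⟩ := hrs
  have hprev : 2 * T.yl - T.yu < T.yl := by linarith
  set b : ℝ := 2 * T.yl - T.yu with hb
  refine ⟨⟨r.xl, max r.yl b, ⟨le_refl _, hrx, le_max_left _ _,
      max_le hry (by linarith)⟩, h9, h1, le_max_right _ _, max_lt h10 hprev⟩,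
    ⟨s.xl, max s.yl b, ⟨le_refl _, hsx, le_max_left _ _,
      max_le hsy (by linarith)⟩, h11, h5, le_max_right _ _, max_lt h12 hprev⟩,
    ⟨max r.xl s.xl, max (max r.yl s.yl) b,
      ⟨le_max_left _ _, max_le hrx h14, le_max_of_le_left (le_max_left _ _),
        max_le (max_le hry h16) (by linarith)⟩,
      ⟨le_max_right _ _, max_le h13 hsx, le_max_of_le_left (le_max_right _ _),
        max_le (max_le h15 hsy) (by linarith)⟩,
      le_max_of_le_left h9, max_lt h1 h5, le_max_right _ _,
      max_lt (max_lt h10 h12) hprev⟩⟩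
end

section
/- Let W be a query window intersecting more than one tile per dimension in a grid. Then for every tile T intersecting W and every dimension d, either T is covered by W in dimension d (requiring zero comparisons), or W starts in T, or W ends in T in dimension d (each requiring at most one comparison per rectangle by Lemmas on single-endpoint tests). Consequently at most two endpoint comparisons per rectangle suffice to decide intersection with W in each relevant tile. -/
/-- Corollary: for a window W intersecting more than one tile per dimension, in each
dimension d every tile T intersecting W is either covered by W, or W starts in T, or
W ends in T; and in each case the intersection test against W in dimension d needs at
most one endpoint comparison per rectangle (hence at most two overall).
Tiles in dimension d are the half-open unit intervals [i, i+1), i ∈ ℤ. -/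
theorem stmt11 (Wl Wu : ℝ) (hW : Wl ≤ Wu)
    -- W intersects more than one tile in this dimension
    (hmulti : ⌊Wl⌋ < ⌊Wu⌋) :
    ∀ i : ℤ, (Wl < (i : ℝ) + 1 ∧ (i : ℝ) ≤ Wu) →   -- tile i intersects W
      -- T is covered by W, or W starts in T, or W ends in T (half-open tiles)
      ((Wl ≤ (i : ℝ) ∧ (i : ℝ) + 1 ≤ Wu) ∨
       ((i : ℝ) ≤ Wl ∧ Wl < (i : ℝ) + 1) ∨
       ((i : ℝ) ≤ Wu ∧ Wu < (i : ℝ) + 1)) ∧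
      -- at most one comparison per rectangle suffices in this dimension:
      (∀ a b : ℝ, a ≤ b → (a < (i : ℝ) + 1 ∧ (i : ℝ) ≤ b) →
        ((Wl ≤ (i : ℝ) ∧ (i : ℝ) + 1 ≤ Wu) → (a ≤ Wu ∧ Wl ≤ b)) ∧
        (((i : ℝ) ≤ Wl ∧ Wl < (i : ℝ) + 1) → ((a ≤ Wu ∧ Wl ≤ b) ↔ Wl ≤ b)) ∧
        (((i : ℝ) ≤ Wu ∧ Wu < (i : ℝ) + 1) → ((a ≤ Wu ∧ Wl ≤ b) ↔ a ≤ Wu))) := by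
  intro i ⟨hi1, hi2⟩
  constructor
  · rcases le_or_gt (i:ℝ) Wl with h | h
    · exact Or.inr (Or.inl ⟨h, hi1⟩)
    · rcases le_or_gt ((i:ℝ)+1) Wu with h2 | h2
      · exact Or.inl ⟨h.le, h2⟩
      · exact Or.inr (Or.inr ⟨hi2, h2⟩)
  · intro a b hab ⟨ha, hb⟩
    refine ⟨fun ⟨h1, h2⟩ => ⟨le_trans ha.le h2, le_trans h1 hb⟩, ?_, ?_⟩
    · rintro ⟨h1, h2⟩
      constructor
      · rintro ⟨_, hy⟩; exact hy
      · intro hy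
        refine ⟨?_, hy⟩
        have : ((i:ℝ)+1) ≤ Wu := by
          have hfl : ⌊Wl⌋ = i := by
            rw [Int.floor_eq_iff]; exact ⟨h1, h2⟩
          have : (i+1 : ℤ) ≤ ⌊Wu⌋ := by omega
          calc ((i:ℝ)+1) = ((i+1:ℤ):ℝ) := by push_cast; ring
            _ ≤ (⌊Wu⌋ : ℝ) := by exact_mod_cast this
            _ ≤ Wu := Int.floor_le Wu
        exact le_trans ha.le this
    · rintro ⟨h1, h2⟩
      constructor
      · rintro ⟨hy, _⟩; exact hy
      · intro hy
        refine ⟨hy, ?_⟩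
        have hfu : ⌊Wu⌋ = i := by
          rw [Int.floor_eq_iff]; exact ⟨h1, h2⟩
        have : Wl < (i:ℝ) := by
          have h3 : (⌊Wl⌋+1 : ℤ) ≤ i := by omega
          calc Wl < (⌊Wl⌋:ℝ)+1 := Int.lt_floor_add_one Wl
            _ = ((⌊Wl⌋+1:ℤ):ℝ) := by push_cast; ring
            _ ≤ (i:ℝ) := by exact_mod_cast h3
        exact le_trans this.le hb
end

section
/- If two rectangles r and s intersect, then the tile of the regular grid containing the point (max(r.x_l, s.x_l), max(r.y_l, s.y_l)) is a tile to which both r and s are assigned; moreover it is the unique lexicographically smallest tile (in grid coordinates) in which the pair (r,s) is discovered as intersecting. -/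
/-- rectangle intersects the half-open unit grid tile [i,i+1) × [j,j+1) -/
def intersectsTile (r : Rect) (i j : ℤ) : Prop :=
  r.xl < (i : ℝ) + 1 ∧ (i : ℝ) ≤ r.xu ∧ r.yl < (j : ℝ) + 1 ∧ (j : ℝ) ≤ r.yu

/-- If rectangles r and s intersect, then the tile containing the reference point
(max(r.x_l,s.x_l), max(r.y_l,s.y_l)) is assigned both r and s, and it is the unique
lexicographically smallest (row, column) tile in which both r and s appear. -/
theorem stmt13 (r s : Rect)
    (hrv : r.xl ≤ r.xu ∧ r.yl ≤ r.yu) (hsv : s.xl ≤ s.xu ∧ s.yl ≤ s.yu)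
    -- r and s intersect
    (hrs : r.xl ≤ s.xu ∧ s.xl ≤ r.xu ∧ r.yl ≤ s.yu ∧ s.yl ≤ r.yu) :
    intersectsTile r ⌊max r.xl s.xl⌋ ⌊max r.yl s.yl⌋ ∧
    intersectsTile s ⌊max r.xl s.xl⌋ ⌊max r.yl s.yl⌋ ∧
    -- the reference point lies in that tile (and in r ∩ s)
    ((⌊max r.xl s.xl⌋ : ℝ) ≤ max r.xl s.xl ∧ max r.xl s.xl < (⌊max r.xl s.xl⌋ : ℝ) + 1 ∧
     (⌊max r.yl s.yl⌋ : ℝ) ≤ max r.yl s.yl ∧ max r.yl s.yl < (⌊max r.yl s.yl⌋ : ℝ) + 1) ∧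
    -- lexicographically smallest, ordered by (row = y index, column = x index)
    (∀ i j : ℤ, intersectsTile r i j → intersectsTile s i j →
      (⌊max r.yl s.yl⌋ < j ∨ (⌊max r.yl s.yl⌋ = j ∧ ⌊max r.xl s.xl⌋ ≤ i))) := by

  obtain ⟨hr1, hr2⟩ := hrv
  obtain ⟨hs1, hs2⟩ := hsv
  obtain ⟨h1, h2, h3, h4⟩ := hrs
  have fx1 : (⌊max r.xl s.xl⌋ : ℝ) ≤ max r.xl s.xl := Int.floor_le _
  have fx2 : max r.xl s.xl < (⌊max r.xl s.xl⌋ : ℝ) + 1 := Int.lt_floor_add_one _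
  have fy1 : (⌊max r.yl s.yl⌋ : ℝ) ≤ max r.yl s.yl := Int.floor_le _
  have fy2 : max r.yl s.yl < (⌊max r.yl s.yl⌋ : ℝ) + 1 := Int.lt_floor_add_one _
  refine ⟨⟨?_, ?_, ?_, ?_⟩, ⟨?_, ?_, ?_, ?_⟩, ⟨fx1, fx2, fy1, fy2⟩, ?_⟩
  · exact lt_of_le_of_lt (le_max_left _ _) fx2
  · exact fx1.trans (max_le hr1 h2)
  · exact lt_of_le_of_lt (le_max_left _ _) fy2
  · exact fy1.trans (max_le hr2 h4)
  · exact lt_of_le_of_lt (le_max_right _ _) fx2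
  · exact fx1.trans (max_le h1 hs1)
  · exact lt_of_le_of_lt (le_max_right _ _) fy2
  · exact fy1.trans (max_le h3 hs2)
  · intro i j hri hsi
    have hy : ⌊max r.yl s.yl⌋ ≤ j := by
      have : max r.yl s.yl < (j : ℝ) + 1 := max_lt hri.2.2.1 hsi.2.2.1
      have := Int.floor_lt.mpr (by exact_mod_cast this : max r.yl s.yl < ((j+1 : ℤ) : ℝ))
      omega
    rcases lt_or_eq_of_le hy with h | h
    · exact Or.inl h
    · refine Or.inr ⟨h, ?_⟩
      have : max r.xl s.xl < (i : ℝ) + 1 := max_lt hri.1 hsi.1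
      have := Int.floor_lt.mpr (by exact_mod_cast this : max r.xl s.xl < ((i+1 : ℤ) : ℝ))
      omega
end

section
/- In an m-dimensional generalization of the two-layer scheme with 2^m classes per tile (one per subset of dimensions in which the box begins before the tile), if a query window W begins before tile T in dimension d, then every class whose boxes begin before T in dimension d can be disregarded: any of its boxes intersecting W also intersects W in the previous tile in dimension d. -/
/-- m-dimensional generalization: with 2^m classes per tile (classified by the set of
dimensions in which a box begins before the tile), if the query window W begins before
tile T in dimension d, then any box r assigned to T that begins before T in dimension d
and intersects W also intersects W in the previous tile prev(T,d). Tiles are the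
half-open unit cells of the integer grid. -/
theorem stmt15 (m : ℕ) (T : Fin m → ℤ) (W r : Fin m → ℝ × ℝ) (d : Fin m)
    (hWv : ∀ e, (W e).1 ≤ (W e).2) (hrv : ∀ e, (r e).1 ≤ (r e).2)
    -- W intersects tile T
    (hWT : ∀ e, (W e).1 < (T e : ℝ) + 1 ∧ (T e : ℝ) ≤ (W e).2)
    -- r is assigned to tile T
    (hrT : ∀ e, (r e).1 < (T e : ℝ) + 1 ∧ (T e : ℝ) ≤ (r e).2)
    -- W begins before T in dimension d
    (hWd : (W d).1 < (T d : ℝ))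
    -- r is in a class whose boxes begin before T in dimension d, i.e. d ∈ S(r,T)
    (hrd : (r d).1 < (T d : ℝ))
    -- r intersects W
    (hrW : ∀ e, (r e).1 ≤ (W e).2 ∧ (W e).1 ≤ (r e).2) :
    -- r intersects W within prev(T,d)
    ∃ p : Fin m → ℝ,
      (∀ e, (r e).1 ≤ p e ∧ p e ≤ (r e).2) ∧
      (∀ e, (W e).1 ≤ p e ∧ p e ≤ (W e).2) ∧
      (∀ e, e ≠ d → ((T e : ℝ) ≤ p e ∧ p e < (T e : ℝ) + 1)) ∧
      ((T d : ℝ) - 1 ≤ p d ∧ p d < (T d : ℝ)) := by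
  refine ⟨fun e => if e = d then max (max (r e).1 (W e).1) ((T e : ℝ) - 1)
      else max (max (r e).1 (W e).1) (T e : ℝ), ?_, ?_, ?_, ?_⟩
  · intro e
    by_cases h : e = d
    · subst h
      beta_reduce
      rw [if_pos rfl]
      simp only [le_max_iff, max_le_iff]
      exact ⟨Or.inl (Or.inl le_rfl), ⟨hrv e, (hrW e).2⟩, by linarith [(hrT e).2]⟩
    · beta_reduce
      rw [if_neg h]
      simp only [le_max_iff, max_le_iff]
      exact ⟨Or.inl (Or.inl le_rfl), ⟨hrv e, (hrW e).2⟩, (hrT e).2⟩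
  · intro e
    by_cases h : e = d
    · subst h
      beta_reduce
      rw [if_pos rfl]
      simp only [le_max_iff, max_le_iff]
      exact ⟨Or.inl (Or.inr le_rfl), ⟨(hrW e).1, hWv e⟩, by linarith [(hWT e).2]⟩
    · beta_reduce
      rw [if_neg h]
      simp only [le_max_iff, max_le_iff]
      exact ⟨Or.inl (Or.inr le_rfl), ⟨(hrW e).1, hWv e⟩, (hWT e).2⟩
  · intro e he
    beta_reduce
    rw [if_neg he]
    simp only [le_max_iff, max_lt_iff]
    exact ⟨Or.inr le_rfl, ⟨(hrT e).1, (hWT e).1⟩, by linarith⟩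
  · beta_reduce
    rw [if_pos rfl]
    simp only [le_max_iff, max_lt_iff]
    exact ⟨Or.inr le_rfl, ⟨hrd, hWd⟩, by linarith⟩
end

section
/- If a tile T from a coarse 2^m × 2^m grid exactly equals the union of a k×k block of tiles from a fine 2^n × 2^n grid (k = 2^{n-m}), then class A of T with respect to the coarse grid equals the union over all k² fine tiles T_i of their class-A contents, class B of T equals the union of class-B contents of the top-row fine tiles, class C of T equals the union of class-C contents of the left-column fine tiles, and class D of T equals the class-D contents of the top-left fine tile. -/
/-- rectangle intersects the half-open square tile [a, a+w) × [b, b+w) -/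
def intTile (r : Rect) (a b w : ℝ) : Prop :=
  r.xl < a + w ∧ a ≤ r.xu ∧ r.yl < b + w ∧ b ≤ r.yu

def clA (r : Rect) (a b w : ℝ) : Prop := intTile r a b w ∧ a ≤ r.xl ∧ b ≤ r.yl
def clB (r : Rect) (a b w : ℝ) : Prop := intTile r a b w ∧ a ≤ r.xl ∧ r.yl < b
def clC (r : Rect) (a b w : ℝ) : Prop := intTile r a b w ∧ r.xl < a ∧ b ≤ r.yl
def clD (r : Rect) (a b w : ℝ) : Prop := intTile r a b w ∧ r.xl < a ∧ r.yl < b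

/-- Grid transformation: a coarse tile T (side k = 2^(n-m), measured in fine-tile
units) equals a k×k block of fine unit tiles. Class A of T is the union of the
class-A contents of all k² fine tiles; class B of T is the union of the class-B
contents of the top-row fine tiles; class C of T the union of the class-C contents of
the left-column fine tiles; and class D of T equals the class-D contents of the
top-left fine tile. -/
theorem stmt16 (n m : ℕ) (hmn : m < n) (k : ℕ) (hk : k = 2 ^ (n - m))
    (I J : ℤ) (r : Rect) (hrx : r.xl ≤ r.xu) (hry : r.yl ≤ r.yu) :
    (clA r ((k : ℝ) * I) ((k : ℝ) * J) k ↔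
      ∃ i j : ℤ, (k : ℤ) * I ≤ i ∧ i < (k : ℤ) * (I + 1) ∧
        (k : ℤ) * J ≤ j ∧ j < (k : ℤ) * (J + 1) ∧ clA r i j 1) ∧
    (clB r ((k : ℝ) * I) ((k : ℝ) * J) k ↔
      ∃ i : ℤ, (k : ℤ) * I ≤ i ∧ i < (k : ℤ) * (I + 1) ∧ clB r i ((k : ℝ) * J) 1) ∧
    (clC r ((k : ℝ) * I) ((k : ℝ) * J) k ↔
      ∃ j : ℤ, (k : ℤ) * J ≤ j ∧ j < (k : ℤ) * (J + 1) ∧ clC r ((k : ℝ) * I) j 1) ∧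
    (clD r ((k : ℝ) * I) ((k : ℝ) * J) k ↔ clD r ((k : ℝ) * I) ((k : ℝ) * J) 1) := by
  have hk1 : (1 : ℝ) ≤ k := by
    subst hk; exact_mod_cast Nat.one_le_two_pow
  have hkI : ((((k : ℤ)) * I : ℤ) : ℝ) = (k : ℝ) * I := by push_cast; ring
  have hkJ : ((((k : ℤ)) * J : ℤ) : ℝ) = (k : ℝ) * J := by push_cast; ring
  have hkI1 : ((((k : ℤ)) * (I + 1) : ℤ) : ℝ) = (k : ℝ) * I + k := by push_cast; ring
  have hkJ1 : ((((k : ℤ)) * (J + 1) : ℤ) : ℝ) = (k : ℝ) * J + k := by push_cast; ring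
  simp only [clA, clB, clC, clD, intTile]
  refine ⟨⟨?_, ?_⟩, ⟨?_, ?_⟩, ⟨?_, ?_⟩, ?_, ?_⟩
  · rintro ⟨⟨h1, h2, h3, h4⟩, h5, h6⟩
    refine ⟨⌊r.xl⌋, ⌊r.yl⌋, ?_, ?_, ?_, ?_, ⟨?_, ?_, ?_, ?_⟩, ?_, ?_⟩
    · rw [Int.le_floor, hkI]; exact h5
    · rw [Int.floor_lt, hkI1]; exact h1
    · rw [Int.le_floor, hkJ]; exact h6
    · rw [Int.floor_lt, hkJ1]; exact h3
    · exact Int.lt_floor_add_one _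
    · exact (Int.floor_le _).trans hrx
    · exact Int.lt_floor_add_one _
    · exact (Int.floor_le _).trans hry
    · exact Int.floor_le _
    · exact Int.floor_le _
  · rintro ⟨i, j, hi1, hi2, hj1, hj2, ⟨g1, g2, g3, g4⟩, g5, g6⟩
    have hi1' : (k : ℝ) * I ≤ i := by rw [← hkI]; exact_mod_cast hi1
    have hi2' : (i : ℝ) + 1 ≤ (k : ℝ) * I + k := by rw [← hkI1]; exact_mod_cast Int.add_one_le_iff.mpr hi2
    have hj1' : (k : ℝ) * J ≤ j := by rw [← hkJ]; exact_mod_cast hj1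
    have hj2' : (j : ℝ) + 1 ≤ (k : ℝ) * J + k := by rw [← hkJ1]; exact_mod_cast Int.add_one_le_iff.mpr hj2
    exact ⟨⟨lt_of_lt_of_le g1 (by linarith), le_trans hi1' (g5.trans hrx),
      lt_of_lt_of_le g3 (by linarith), le_trans hj1' (g6.trans hry)⟩,
      hi1'.trans g5, hj1'.trans g6⟩
  · rintro ⟨⟨h1, h2, h3, h4⟩, h5, h6⟩
    refine ⟨⌊r.xl⌋, ?_, ?_, ⟨?_, ?_, ?_, ?_⟩, ?_, h6⟩
    · rw [Int.le_floor, hkI]; exact h5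
    · rw [Int.floor_lt, hkI1]; exact h1
    · exact Int.lt_floor_add_one _
    · exact (Int.floor_le _).trans hrx
    · linarith
    · exact h4
    · exact Int.floor_le _
  · rintro ⟨i, hi1, hi2, ⟨g1, g2, g3, g4⟩, g5, g6⟩
    have hi1' : (k : ℝ) * I ≤ i := by rw [← hkI]; exact_mod_cast hi1
    have hi2' : (i : ℝ) + 1 ≤ (k : ℝ) * I + k := by rw [← hkI1]; exact_mod_cast Int.add_one_le_iff.mpr hi2
    exact ⟨⟨lt_of_lt_of_le g1 (by linarith), le_trans hi1' (g5.trans hrx),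
      by linarith, g4⟩, hi1'.trans g5, g6⟩
  · rintro ⟨⟨h1, h2, h3, h4⟩, h5, h6⟩
    refine ⟨⌊r.yl⌋, ?_, ?_, ⟨?_, h2, ?_, ?_⟩, h5, ?_⟩
    · rw [Int.le_floor, hkJ]; exact h6
    · rw [Int.floor_lt, hkJ1]; exact h3
    · linarith
    · exact Int.lt_floor_add_one _
    · exact (Int.floor_le _).trans hry
    · exact Int.floor_le _
  · rintro ⟨j, hj1, hj2, ⟨g1, g2, g3, g4⟩, g5, g6⟩
    have hj1' : (k : ℝ) * J ≤ j := by rw [← hkJ]; exact_mod_cast hj1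
    have hj2' : (j : ℝ) + 1 ≤ (k : ℝ) * J + k := by rw [← hkJ1]; exact_mod_cast Int.add_one_le_iff.mpr hj2
    exact ⟨⟨by linarith, g2, lt_of_lt_of_le g3 (by linarith),
      le_trans hj1' (g6.trans hry)⟩, g5, hj1'.trans g6⟩
  · rintro ⟨⟨h1, h2, h3, h4⟩, h5, h6⟩
    exact ⟨⟨by linarith, h2, by linarith, h4⟩, h5, h6⟩
  · rintro ⟨⟨h1, h2, h3, h4⟩, h5, h6⟩
    exact ⟨⟨by linarith, h2, by linarith, h4⟩, h5, h6⟩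
end
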